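/- arXiv:2201.02002 — 2 statements merged into one kernel-verified Lean document; each statement's English description precedes it below -/
import Mathlib

section
/- Let p_i = Σ_{ℓ=1}^{n} [ (Σ_{j ≥ ⌈ηℓ⌉} C(i,j)·C(n-i, ℓ-j)) / C(n,ℓ) ] · C(n,ℓ) · (1/m)^ℓ · (1 - 1/m)^{n-ℓ}, the probability that a broker is red-majority when each of n mobile nodes (i of them red) independently connects to the broker with probability 1/m and the broker is red-majority iff at least η fraction of its connected nodes are red. Then p_i is monotonically non-decreasing in i (for fixed n, m, η with 1/2 < η ≤ 1). -/
/-!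
Given `ℓ` connections, the number of red nodes among them is hypergeometric, and `p i` is a
nonnegative mixture over `ℓ` of its upper tails `T_k(i, a) = ∑_{j ≥ k} C(i, j) C(a, ℓ - j)`
(`a = n - i`). So it suffices that recolouring one blue node red does not decrease a tail:
Pascal's rule on both factors gives `T_k(i + 1, a) = T_k(i, a + 1) + C(i, k - 1) C(a, ℓ - k)`
for `k ≥ 1`, and for `k = 0` both sides are `C(i + a + 1, ℓ)` by Vandermonde.
-/

open Finset Finset.Nat

/-- The number of ways to choose `k + r` out of `i + a` objects with at least `k` among the
first `i`. -/
def hypergeomTail (i a k r : ℕ) : ℕ :=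
  ∑ p ∈ antidiagonal r, i.choose (k + p.1) * a.choose p.2

namespace hypergeomTail

theorem zero_threshold (i a r : ℕ) : hypergeomTail i a 0 r = (i + a).choose r := by
  simp [hypergeomTail, Nat.add_choose_eq]

theorem succ_left (i a k r : ℕ) :
    hypergeomTail (i + 1) a (k + 1) r = hypergeomTail i a (k + 1) r + hypergeomTail i a k r := by
  simp only [hypergeomTail, ← sum_add_distrib, ← add_mul]
  refine sum_congr rfl fun p _ => ?_
  rw [show k + 1 + p.1 = k + p.1 + 1 by omega, Nat.choose_succ_succ', add_comm]

theorem succ_right (i a k r : ℕ) :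
    hypergeomTail i (a + 1) k (r + 1) = hypergeomTail i a k (r + 1) + hypergeomTail i a k r := by
  simp only [hypergeomTail, sum_antidiagonal_succ', Nat.choose_succ_succ', mul_add,
    sum_add_distrib, Nat.choose_zero_right]
  ring

theorem succ_range (i a k r : ℕ) :
    hypergeomTail i a k (r + 1) = i.choose k * a.choose (r + 1) + hypergeomTail i a (k + 1) r := by
  simp only [hypergeomTail, sum_antidiagonal_succ, add_zero]
  congr 1
  refine sum_congr rfl fun p _ => ?_
  rw [show k + (p.1 + 1) = k + 1 + p.1 by omega]

theorem exchange (i a k r : ℕ) :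
    hypergeomTail (i + 1) a (k + 1) r =
      hypergeomTail i (a + 1) (k + 1) r + i.choose k * a.choose r := by
  cases r with
  | zero => simp [hypergeomTail, Nat.choose_succ_succ', add_comm]
  | succ r =>
    rw [succ_left, succ_right, succ_range i a k r]
    ring

theorem le_succ_left (i a k r : ℕ) :
    hypergeomTail i (a + 1) k r ≤ hypergeomTail (i + 1) a k r := by
  cases k with
  | zero => rw [zero_threshold, zero_threshold, ← add_assoc, Nat.add_right_comm]
  | succ k => exact exchange i a k r ▸ Nat.le_add_right _ _

end hypergeomTail

theorem sum_Icc_choose_mul_choose_eq_hypergeomTail {k ℓ : ℕ} (h : k ≤ ℓ) (i a : ℕ) :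
    ∑ j ∈ Icc k ℓ, i.choose j * a.choose (ℓ - j) = hypergeomTail i a k (ℓ - k) := by
  rw [hypergeomTail, sum_antidiagonal_eq_sum_range_succ_mk, ← Ico_add_one_right_eq_Icc,
    sum_Ico_eq_sum_range, Nat.sub_add_comm h]
  refine sum_congr rfl fun t _ => ?_
  congr 2
  omega

theorem sum_Icc_choose_mul_choose_le_succ_left (i a k ℓ : ℕ) :
    ∑ j ∈ Icc k ℓ, i.choose j * (a + 1).choose (ℓ - j)
      ≤ ∑ j ∈ Icc k ℓ, (i + 1).choose j * a.choose (ℓ - j) := by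
  rcases le_or_gt k ℓ with h | h
  · simpa only [sum_Icc_choose_mul_choose_eq_hypergeomTail h] using
      hypergeomTail.le_succ_left i a k (ℓ - k)
  · simp [Icc_eq_empty_of_lt h]

theorem broker_red_probability_monotone_general (n m : ℕ) (η : ℝ) (p : ℕ → ℝ)
    (hp : ∀ i, p i = ∑ ℓ ∈ Finset.Icc 1 n,
      ((∑ j ∈ Finset.Icc ⌈η * ℓ⌉₊ ℓ,
          (Nat.choose i j : ℝ) * (Nat.choose (n - i) (ℓ - j))) / (Nat.choose n ℓ)) *
        ((Nat.choose n ℓ : ℝ) * (1 / m) ^ ℓ * (1 - 1 / m) ^ (n - ℓ))) :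
    ∀ i i' : ℕ, i ≤ i' → i' ≤ n → p i ≤ p i' := by
  have hq : (0 : ℝ) ≤ 1 - 1 / m := sub_nonneg.2 (one_div (m : ℝ) ▸ Nat.cast_inv_le_one m)
  have hmono : MonotoneOn p (Set.Iic n) := by
    refine monotoneOn_of_le_add_one Set.ordConnected_Iic fun i _ _ hi => ?_
    have hsub : n - i = n - (i + 1) + 1 := by simp only [Set.mem_Iic] at hi; omega
    rw [hp, hp, hsub]
    gcongr ∑ _ ∈ _, ?_ / _ * _ with ℓ
    exact_mod_cast sum_Icc_choose_mul_choose_le_succ_left i (n - (i + 1)) _ ℓ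
  exact fun i i' hii' hi' => hmono (hii'.trans hi') hi' hii'

/-- The probability `p_i` that a broker is red-majority (each of `n` nodes, `i` red,
connecting independently with probability `1/m`, red-majority meaning at least an `η`
fraction of connected nodes are red) is non-decreasing in `i`. -/
theorem broker_red_probability_monotone (n m : ℕ) (hm : 1 ≤ m) (η : ℝ)
    (hη : 1 / 2 < η) (hη1 : η ≤ 1) (p : ℕ → ℝ)
    (hp : ∀ i, p i = ∑ ℓ ∈ Finset.Icc 1 n,
      ((∑ j ∈ Finset.Icc ⌈η * ℓ⌉₊ ℓ,
          (Nat.choose i j : ℝ) * (Nat.choose (n - i) (ℓ - j))) / (Nat.choose n ℓ)) *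
        ((Nat.choose n ℓ : ℝ) * (1 / m) ^ ℓ * (1 - 1 / m) ^ (n - ℓ))) :
    ∀ i i' : ℕ, i ≤ i' → i' ≤ n → p i ≤ p i' :=
  broker_red_probability_monotone_general n m η p hp
end

section
/- For hypergeometric sampling: if j red items are drawn when choosing ℓ items uniformly without replacement from a population of n items with i red, then the probability of drawing at least t red items, Σ_{j≥t} C(i,j)C(n-i,ℓ-j)/C(n,ℓ), is non-decreasing in i for fixed n, ℓ, t. -/
private lemma vandermonde_range (n ℓ m : ℕ) (hm : m ≤ n) :
    ∑ j ∈ Finset.Icc 0 ℓ, Nat.choose m j * Nat.choose (n - m) (ℓ - j)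
      = Nat.choose n ℓ := by
  have h := Nat.add_choose_eq m (n - m) ℓ
  rw [Nat.add_sub_cancel' hm] at h
  rw [h, Finset.Nat.sum_antidiagonal_eq_sum_range_succ_mk]
  rw [show Finset.Icc 0 ℓ = Finset.range (ℓ + 1) by
    ext x; simp [Nat.lt_succ_iff]]

private lemma hyper_step (n ℓ t i : ℕ) (hin : i + 1 ≤ n) :
    ∑ j ∈ Finset.Icc t ℓ, ((Nat.choose i j : ℝ) * (Nat.choose (n - i) (ℓ - j)))
      ≤ ∑ j ∈ Finset.Icc t ℓ,
          ((Nat.choose (i + 1) j : ℝ) * (Nat.choose (n - (i + 1)) (ℓ - j))) := by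
  rcases le_or_gt t ℓ with htℓ | htℓ
  · match t with
    | 0 =>
        have h1 : ∑ j ∈ Finset.Icc 0 ℓ,
            ((Nat.choose i j : ℝ) * (Nat.choose (n - i) (ℓ - j)))
            = (Nat.choose n ℓ : ℝ) := by
          exact_mod_cast congrArg (fun x : ℕ => (x : ℝ))
            (vandermonde_range n ℓ i (by omega))
        have h2 : ∑ j ∈ Finset.Icc 0 ℓ,
            ((Nat.choose (i+1) j : ℝ) * (Nat.choose (n - (i+1)) (ℓ - j)))
            = (Nat.choose n ℓ : ℝ) := by
          exact_mod_cast congrArg (fun x : ℕ => (x : ℝ))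
            (vandermonde_range n ℓ (i + 1) hin)
        rw [h1, h2]
    | (s + 1) =>
        have hs1 : 1 ≤ ℓ := le_trans (Nat.succ_le_succ (Nat.zero_le s)) htℓ
        rw [← sub_nonneg, ← Finset.sum_sub_distrib]
        set G : ℕ → ℝ := fun j =>
          (Nat.choose i j : ℝ) * (Nat.choose (n - (i + 1)) (ℓ - j - 1)) with hG
        -- per-term identity on Ico (s+1) ℓ
        have hterm : ∀ j ∈ Finset.Ico (s + 1) ℓ,
            ((Nat.choose (i + 1) j : ℝ) * (Nat.choose (n - (i + 1)) (ℓ - j))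
              - (Nat.choose i j : ℝ) * (Nat.choose (n - i) (ℓ - j)))
            = G (j - 1) - G j := by
          intro j hj
          obtain ⟨hj1, hj2⟩ := Finset.mem_Ico.mp hj
          obtain ⟨k, rfl⟩ : ∃ k, j = k + 1 :=
            ⟨j - 1, (Nat.succ_pred_eq_of_pos (lt_of_lt_of_le (Nat.succ_pos s) hj1)).symm⟩
          have hni : n - i = (n - (i + 1)) + 1 := by omega
          have hlj : ℓ - (k + 1) = (ℓ - (k + 1) - 1) + 1 := by omega
          have e1 : Nat.choose (i + 1) (k + 1)
              = Nat.choose i k + Nat.choose i (k + 1) := Nat.choose_succ_succ' i k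
          have e2 : Nat.choose (n - i) (ℓ - (k + 1))
              = Nat.choose (n - (i + 1)) (ℓ - (k + 1) - 1)
                + Nat.choose (n - (i + 1)) (ℓ - (k + 1)) := by
            rw [hni, hlj, Nat.choose_succ_succ', Nat.add_sub_cancel]
          rw [e1, e2]
          push_cast
          have hk : ℓ - k - 1 = ℓ - (k + 1) := by omega
          simp only [hG, Nat.add_sub_cancel, hk]
          ring
        have hsplit : Finset.Icc (s + 1) ℓ = Finset.Ico (s + 1) ℓ ∪ {ℓ} := by
          ext x
          simp only [Finset.mem_Icc, Finset.mem_union, Finset.mem_Ico, Finset.mem_singleton]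
          omega
        have hdisj : Disjoint (Finset.Ico (s + 1) ℓ) ({ℓ} : Finset ℕ) := by
          simp [Finset.disjoint_singleton_right]
        rw [hsplit, Finset.sum_union hdisj, Finset.sum_congr rfl hterm]
        -- telescoping
        have htel : ∑ j ∈ Finset.Ico (s + 1) ℓ, (G (j - 1) - G j)
            = G s - G (ℓ - 1) := by
          rw [Finset.sum_Ico_eq_sum_range]
          have h1 : ∀ k ∈ Finset.range (ℓ - (s + 1)),
              (G (s + 1 + k - 1) - G (s + 1 + k))
                = ((fun m => G (s + m)) k - (fun m => G (s + m)) (k + 1)) := by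
            intro k _
            show G (s + 1 + k - 1) - G (s + 1 + k) = G (s + k) - G (s + (k + 1))
            congr 2 <;> omega
          calc ∑ k ∈ Finset.range (ℓ - (s + 1)), (G (s + 1 + k - 1) - G (s + 1 + k))
              = ∑ k ∈ Finset.range (ℓ - (s + 1)),
                  ((fun m => G (s + m)) k - (fun m => G (s + m)) (k + 1)) :=
                Finset.sum_congr rfl h1
            _ = (fun m => G (s + m)) 0 - (fun m => G (s + m)) (ℓ - (s + 1)) :=
                Finset.sum_range_sub' _ _
            _ = G s - G (ℓ - 1) := by
                show G (s + 0) - G (s + (ℓ - (s + 1))) = G s - G (ℓ - 1)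
                congr 2 <;> omega
        rw [htel]
        -- the boundary term at j = ℓ
        have hbd : ((Nat.choose (i + 1) ℓ : ℝ) * (Nat.choose (n - (i + 1)) (ℓ - ℓ))
              - (Nat.choose i ℓ : ℝ) * (Nat.choose (n - i) (ℓ - ℓ)))
            = (Nat.choose i (ℓ - 1) : ℝ) := by
          simp only [Nat.sub_self, Nat.choose_zero_right, Nat.cast_one, mul_one]
          have : Nat.choose (i + 1) ℓ = Nat.choose i (ℓ - 1) + Nat.choose i ℓ := by
            obtain ⟨m, rfl⟩ : ∃ m, ℓ = m + 1 := ⟨ℓ - 1, by omega⟩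
            simpa using Nat.choose_succ_succ' i m
          rw [this]
          push_cast
          ring
        rw [Finset.sum_singleton, hbd]
        have hGl : G (ℓ - 1) = (Nat.choose i (ℓ - 1) : ℝ) := by
          simp only [hG]
          rw [show ℓ - (ℓ - 1) - 1 = 0 by omega, Nat.choose_zero_right]
          simp
        rw [hGl]
        have : G s - (Nat.choose i (ℓ - 1) : ℝ) + (Nat.choose i (ℓ - 1) : ℝ) = G s := by
          ring
        rw [this]
        simp only [hG]
        positivity
  · rw [Finset.Icc_eq_empty (by omega)]
    simp

/-- The hypergeometric tail `Σ_{j ≥ t} C(i,j)C(n-i,ℓ-j)/C(n,ℓ)` (probability of drawing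
at least `t` red items among `ℓ` drawn without replacement from `n` items, `i` red)
is non-decreasing in `i`. -/
theorem hypergeometric_tail_monotone (n ℓ t : ℕ) (hℓ : ℓ ≤ n) :
    ∀ i i' : ℕ, i ≤ i' → i' ≤ n →
      ∑ j ∈ Finset.Icc t ℓ,
          (Nat.choose i j : ℝ) * (Nat.choose (n - i) (ℓ - j)) / (Nat.choose n ℓ)
        ≤ ∑ j ∈ Finset.Icc t ℓ,
          (Nat.choose i' j : ℝ) * (Nat.choose (n - i') (ℓ - j)) / (Nat.choose n ℓ) := by
  intro i i' hii' hi'n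
  have hc : (0 : ℝ) < (Nat.choose n ℓ : ℝ) := by
    exact_mod_cast Nat.choose_pos hℓ
  have key : ∀ a b : ℕ, a ≤ b → b ≤ n →
      ∑ j ∈ Finset.Icc t ℓ, ((Nat.choose a j : ℝ) * (Nat.choose (n - a) (ℓ - j)))
        ≤ ∑ j ∈ Finset.Icc t ℓ, ((Nat.choose b j : ℝ) * (Nat.choose (n - b) (ℓ - j))) := by
    intro a b hab
    induction b, hab using Nat.le_induction with
    | base => intro _; exact le_refl _
    | succ b hab ih =>
        intro hbn
        exact le_trans (ih (by omega)) (hyper_step n ℓ t b hbn)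
  have h := key i i' hii' hi'n
  calc ∑ j ∈ Finset.Icc t ℓ,
          (Nat.choose i j : ℝ) * (Nat.choose (n - i) (ℓ - j)) / (Nat.choose n ℓ)
      = (∑ j ∈ Finset.Icc t ℓ,
          (Nat.choose i j : ℝ) * (Nat.choose (n - i) (ℓ - j))) / (Nat.choose n ℓ) := by
        rw [Finset.sum_div]
    _ ≤ (∑ j ∈ Finset.Icc t ℓ,
          (Nat.choose i' j : ℝ) * (Nat.choose (n - i') (ℓ - j))) / (Nat.choose n ℓ) :=
        by gcongr
    _ = _ := by rw [Finset.sum_div]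
end
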